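/- arXiv:1607.05520 — 5 statements merged into one kernel-verified Lean document; each statement's English description precedes it below -/
import Mathlib

section
/- Let α ∈ (0,1], let ψ : ℝ² → ℝ be bounded, measurable, compactly supported and satisfy ∫_{ℝ²} ψ(x) dx = 0. Let D ⊆ ℝ² be measurable and let p ∈ ℝ² satisfy dist(p, ∂D) > 0. Then for every s ∈ [−1,1], every b ∈ ℝ and every ι ∈ {−1,1} there exists a₀ > 0 such that the bendlet transform satisfies BS(χ_D)(a,s,b,p,ι) = 0 for all a ∈ (0,a₀); in particular |BS(χ_D)(a,s,b,p,ι)| = O(a^N) as a → 0 for every N ∈ ℕ. (Theorem 3.1, Part 1.) -/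
open MeasureTheory Real Set

/-- Second-order shearing map `S_{(s,b)}(x₁,x₂) = (x₁ + s x₂ + b x₂², x₂)`. -/
noncomputable def shear2 (s b : ℝ) (x : ℝ × ℝ) : ℝ × ℝ :=
  (x.1 + s * x.2 + b * x.2 ^ 2, x.2)

/-- The bendlet `ψ_{a,s,b,t,1}(x) = a^{-(1+α)/2} ψ(A_{a,α}^{-1} S_{(-s,-b)}(x - t))`. -/
noncomputable def bendlet (α : ℝ) (ψ : ℝ × ℝ → ℝ) (a s b : ℝ) (t : ℝ × ℝ) (x : ℝ × ℝ) : ℝ :=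
  a ^ (-(1 + α) / 2) *
    ψ ((shear2 (-s) (-b) (x - t)).1 / a, (shear2 (-s) (-b) (x - t)).2 / a ^ α)

/-- Cone-adapted bendlet with cone index `ι ∈ {1,-1}`. -/
noncomputable def bendletC (α : ℝ) (ψ : ℝ × ℝ → ℝ) (a s b : ℝ) (t : ℝ × ℝ) (ι : ℤ) :
    (ℝ × ℝ) → ℝ :=
  if ι = 1 then bendlet α ψ a s b t
  else fun x => bendlet α ψ a s b (t.2, t.1) (x.2, x.1)

/-- Cone-adapted bendlet transform `BS(f)(a,s,b,t,ι)`. -/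
noncomputable def BS (α : ℝ) (ψ : ℝ × ℝ → ℝ) (f : ℝ × ℝ → ℝ)
    (a s b : ℝ) (t : ℝ × ℝ) (ι : ℤ) : ℝ :=
  ∫ x, f x * bendletC α ψ a s b t ι x

/-- `p ∈ ∂D` is a point of type `(s', b', ι')`. -/
def PointOfType (D : Set (ℝ × ℝ)) (p : ℝ × ℝ) (s' b' : ℝ) (ι' : ℤ) : Prop :=
  if ι' = 1 then
    ∃ ε > 0, ∃ g : ℝ → ℝ, ContDiff ℝ (⊤ : ℕ∞) g ∧ g p.2 = p.1 ∧ deriv g p.2 = s' ∧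
      deriv (deriv g) p.2 = 2 * b' ∧
      (D ∩ Metric.ball p ε = {x ∈ Metric.ball p ε | x.1 ≤ g x.2} ∨
       D ∩ Metric.ball p ε = {x ∈ Metric.ball p ε | g x.2 ≤ x.1})
  else
    ∃ ε > 0, ∃ g : ℝ → ℝ, ContDiff ℝ (⊤ : ℕ∞) g ∧ g p.1 = p.2 ∧ deriv g p.1 = s' ∧
      deriv (deriv g) p.1 = 2 * b' ∧
      (D ∩ Metric.ball p ε = {x ∈ Metric.ball p ε | x.2 ≤ g x.1} ∨
       D ∩ Metric.ball p ε = {x ∈ Metric.ball p ε | g x.1 ≤ x.2})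

/-- `D ⊆ ℝ²` has `C^∞` boundary: every boundary point is a point of some type. -/
def SmoothBoundary (D : Set (ℝ × ℝ)) : Prop :=
  ∀ q ∈ frontier D, ∃ s'' b'' : ℝ, ∃ ι'' : ℤ, (ι'' = 1 ∨ ι'' = -1) ∧
    PointOfType D q s'' b'' ι''

/- ### Auxiliary lemmas -/

private lemma integrable_of_bdd {f : ℝ × ℝ → ℝ} (C : ℝ) (hm : Measurable f)
    (hs : HasCompactSupport f) (hb : ∀ x, |f x| ≤ C) : Integrable f := by
  have h1 : f = (tsupport f).indicator f := (Set.indicator_eq_self.mpr (subset_tsupport f)).symm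
  rw [h1, integrable_indicator_iff (isClosed_tsupport f).measurableSet]
  exact Measure.integrableOn_of_bounded (hs.measure_lt_top.ne) hm.aestronglyMeasurable
    (Filter.Eventually.of_forall fun x => (Real.norm_eq_abs _ ▸ hb x))

private noncomputable def affHomeo (a e : ℝ) (ha : a ≠ 0) (he : e ≠ 0) (c : ℝ → ℝ)
    (hc : Continuous c) (t₂ : ℝ) : ℝ × ℝ ≃ₜ ℝ × ℝ where
  toFun := fun x => ((x.1 - c x.2) / a, (x.2 - t₂) / e)
  invFun := fun u => (a * u.1 + c (t₂ + e * u.2), t₂ + e * u.2)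
  left_inv := by
    intro x
    have h2 : t₂ + e * ((x.2 - t₂) / e) = x.2 := by field_simp; ring
    simp only [h2]
    have h1 : a * ((x.1 - c x.2) / a) + c x.2 = x.1 := by field_simp; ring
    exact Prod.ext h1 rfl
  right_inv := by
    intro u
    have h2 : (t₂ + e * u.2 - t₂) / e = u.2 := by field_simp; ring
    have h1 : (a * u.1 + c (t₂ + e * u.2) - c (t₂ + e * u.2)) / a = u.1 := by field_simp; ring
    exact Prod.ext h1 h2
  continuous_toFun := by fun_prop
  continuous_invFun := by fun_prop

private lemma hcs_comp (ψ : ℝ × ℝ → ℝ) (hs : HasCompactSupport ψ) (a e : ℝ) (ha : a ≠ 0)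
    (he : e ≠ 0) (c : ℝ → ℝ) (hc : Continuous c) (t₂ : ℝ) :
    HasCompactSupport (fun x : ℝ × ℝ => ψ ((x.1 - c x.2) / a, (x.2 - t₂) / e)) :=
  hs.comp_homeomorph (affHomeo a e ha he c hc t₂)

private lemma integral_affine (ψ : ℝ × ℝ → ℝ) (hψ : Integrable ψ)
    (a e : ℝ) (ha : 0 < a) (he : 0 < e) (c : ℝ → ℝ) (t₂ : ℝ)
    (hF : Integrable (fun x : ℝ × ℝ => ψ ((x.1 - c x.2) / a, (x.2 - t₂) / e))) :
    ∫ x : ℝ × ℝ, ψ ((x.1 - c x.2) / a, (x.2 - t₂) / e) = (a * e) * ∫ x, ψ x := by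
  rw [Measure.volume_eq_prod] at hF hψ ⊢
  rw [integral_prod_symm _ hF]
  have inner : ∀ y : ℝ, (∫ x : ℝ, ψ ((x - c y) / a, (y - t₂) / e))
      = a * ∫ u : ℝ, ψ (u, (y - t₂) / e) := by
    intro y
    rw [show (fun x : ℝ => ψ ((x - c y) / a, (y - t₂) / e))
        = (fun x : ℝ => (fun v : ℝ => ψ (v / a, (y - t₂) / e)) (x - c y)) from rfl,
      integral_sub_right_eq_self (fun v : ℝ => ψ (v / a, (y - t₂) / e)) (c y),
      MeasureTheory.Measure.integral_comp_div (fun v : ℝ => ψ (v, (y - t₂) / e)) a,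
      abs_of_pos ha, smul_eq_mul]
  simp only [inner]
  rw [MeasureTheory.integral_const_mul,
    show (fun y : ℝ => ∫ u : ℝ, ψ (u, (y - t₂) / e))
      = (fun y : ℝ => (fun w : ℝ => ∫ u : ℝ, ψ (u, w / e)) (y - t₂)) from rfl,
    integral_sub_right_eq_self (fun w : ℝ => ∫ u : ℝ, ψ (u, w / e)) t₂,
    MeasureTheory.Measure.integral_comp_div (fun w : ℝ => ∫ u : ℝ, ψ (u, w)) e,
    abs_of_pos he, smul_eq_mul, ← integral_prod_symm _ hψ]
  ring

private lemma bendlet_eq (α : ℝ) (ψ : ℝ × ℝ → ℝ) (a s b : ℝ) (t : ℝ × ℝ) (x : ℝ × ℝ) :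
    bendlet α ψ a s b t x = a ^ (-(1 + α) / 2) *
      ψ ((x.1 - (t.1 + s * (x.2 - t.2) + b * (x.2 - t.2) ^ 2)) / a, (x.2 - t.2) / a ^ α) := by
  simp only [bendlet, shear2, Prod.fst_sub, Prod.snd_sub]
  congr 3
  ring

private lemma bendlet_integral_zero (α : ℝ) (ψ : ℝ × ℝ → ℝ) (Cψ : ℝ)
    (hψ_bdd : ∀ x, |ψ x| ≤ Cψ) (hψ_meas : Measurable ψ) (hψ_supp : HasCompactSupport ψ)
    (hψ_vm : ∫ x : ℝ × ℝ, ψ x = 0) (a s b : ℝ) (t : ℝ × ℝ) (ha : 0 < a) :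
    ∫ x : ℝ × ℝ, bendlet α ψ a s b t x = 0 := by
  have he : (0 : ℝ) < a ^ α := Real.rpow_pos_of_pos ha α
  have hcont : Continuous (fun y : ℝ => t.1 + s * (y - t.2) + b * (y - t.2) ^ 2) := by fun_prop
  have hmeasF : Measurable (fun x : ℝ × ℝ =>
      ψ ((x.1 - (t.1 + s * (x.2 - t.2) + b * (x.2 - t.2) ^ 2)) / a, (x.2 - t.2) / a ^ α)) :=
    hψ_meas.comp (by fun_prop)
  have hcsF := hcs_comp ψ hψ_supp a (a ^ α) ha.ne' he.ne'
    (fun y => t.1 + s * (y - t.2) + b * (y - t.2) ^ 2) hcont t.2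
  have hintψ := integrable_of_bdd Cψ hψ_meas hψ_supp hψ_bdd
  have hintF : Integrable (fun x : ℝ × ℝ =>
      ψ ((x.1 - (t.1 + s * (x.2 - t.2) + b * (x.2 - t.2) ^ 2)) / a, (x.2 - t.2) / a ^ α)) :=
    integrable_of_bdd Cψ hmeasF hcsF (fun x => hψ_bdd _)
  have key := integral_affine ψ hintψ a (a ^ α) ha he
    (fun y => t.1 + s * (y - t.2) + b * (y - t.2) ^ 2) t.2 hintF
  simp only [bendlet_eq]
  rw [MeasureTheory.integral_const_mul, key, hψ_vm, mul_zero, mul_zero]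

private lemma bendlet_locally_zero (α : ℝ) (hα0 : 0 < α) (hα1 : α ≤ 1) (ψ : ℝ × ℝ → ℝ)
    (R : ℝ) (hR : 0 ≤ R) (hsupp : ∀ u : ℝ × ℝ, ψ u ≠ 0 → |u.1| ≤ R ∧ |u.2| ≤ R)
    (s : ℝ) (hs : |s| ≤ 1) (b : ℝ) (t : ℝ × ℝ) (r : ℝ) (hr : 0 < r) :
    ∃ a₀ > 0, ∀ a : ℝ, 0 < a → a < a₀ →
      ∀ x : ℝ × ℝ, x ∉ Metric.ball t r → bendlet α ψ a s b t x = 0 := by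
  set M : ℝ := 2 * R + |b| * R ^ 2 + 1 with hM
  have hMpos : 0 < M := by positivity
  have hrM : 0 < r / M := by positivity
  refine ⟨min 1 ((r / M) ^ (1 / α)), lt_min one_pos (Real.rpow_pos_of_pos hrM _), ?_⟩
  intro a ha haa x hx
  by_contra hne
  have hψne : ψ ((shear2 (-s) (-b) (x - t)).1 / a, (shear2 (-s) (-b) (x - t)).2 / a ^ α) ≠ 0 := by
    intro h0
    exact hne (by rw [bendlet, h0, mul_zero])
  obtain ⟨h1, h2⟩ := hsupp _ hψne
  have hea : (0 : ℝ) < a ^ α := Real.rpow_pos_of_pos ha α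
  have ha1 : a ≤ 1 := le_of_lt (lt_of_lt_of_le haa (min_le_left _ _))
  -- a ^ α < r / M
  have hαne : α ≠ 0 := hα0.ne'
  have hlt : a ^ α < r / M := by
    have h3 : a ^ α < (min 1 ((r / M) ^ (1 / α))) ^ α := Real.rpow_lt_rpow ha.le haa hα0
    have h4 : (min 1 ((r / M) ^ (1 / α))) ^ α ≤ ((r / M) ^ (1 / α)) ^ α :=
      Real.rpow_le_rpow (le_min zero_le_one (Real.rpow_pos_of_pos hrM _).le)
        (min_le_right _ _) hα0.le
    have h5 : ((r / M) ^ (1 / α)) ^ α = r / M := by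
      rw [← Real.rpow_mul hrM.le, one_div_mul_cancel hαne, Real.rpow_one]
    linarith
  have haα1 : a ^ α ≤ 1 := Real.rpow_le_one ha.le ha1 hα0.le
  have haaα : a ≤ a ^ α := by
    have := Real.rpow_le_rpow_of_exponent_ge ha ha1 hα1
    rwa [Real.rpow_one] at this
  -- bounds
  set d : ℝ := x.2 - t.2 with hd
  have h2' : |d| ≤ R * a ^ α := by
    have : |d / a ^ α| ≤ R := by
      simpa [shear2, Prod.snd_sub] using h2
    rw [abs_div, abs_of_pos hea, div_le_iff₀ hea] at this
    linarith [this]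
  have h1' : |x.1 - t.1 - s * d - b * d ^ 2| ≤ R * a := by
    have : |(x.1 - t.1 + -s * d + -b * d ^ 2) / a| ≤ R := by
      simpa [shear2, Prod.fst_sub, Prod.snd_sub] using h1
    rw [abs_div, abs_of_pos ha, div_le_iff₀ ha] at this
    have heq : x.1 - t.1 + -s * d + -b * d ^ 2 = x.1 - t.1 - s * d - b * d ^ 2 := by ring
    rw [heq] at this
    linarith [this]
  have hd2 : d ^ 2 ≤ R ^ 2 * a ^ α := by
    have h6 : d ^ 2 = |d| ^ 2 := (sq_abs d).symm
    have h7 : |d| ^ 2 ≤ (R * a ^ α) ^ 2 := by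
      apply sq_le_sq' <;> [linarith [abs_nonneg d, mul_nonneg hR hea.le]; linarith]
    have h8 : (R * a ^ α) ^ 2 = R ^ 2 * (a ^ α * a ^ α) := by ring
    nlinarith [hea.le, haα1, sq_nonneg R]
  have hx1 : |x.1 - t.1| ≤ M * a ^ α := by
    have hb1 : |x.1 - t.1| ≤ |x.1 - t.1 - s * d - b * d ^ 2| + |s| * |d| + |b| * d ^ 2 := by
      have := abs_add_le (x.1 - t.1 - s * d - b * d ^ 2) (s * d + b * d ^ 2)
      have habs : |s * d + b * d ^ 2| ≤ |s| * |d| + |b| * d ^ 2 := by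
        calc |s * d + b * d ^ 2| ≤ |s * d| + |b * d ^ 2| := abs_add_le _ _
        _ = |s| * |d| + |b| * d ^ 2 := by rw [abs_mul, abs_mul, abs_of_nonneg (sq_nonneg d)]
      calc |x.1 - t.1| = |x.1 - t.1 - s * d - b * d ^ 2 + (s * d + b * d ^ 2)| := by ring_nf
      _ ≤ |x.1 - t.1 - s * d - b * d ^ 2| + |s * d + b * d ^ 2| := abs_add_le _ _
      _ ≤ _ := by linarith
    have hsd : |s| * |d| ≤ R * a ^ α := by
      calc |s| * |d| ≤ 1 * |d| := mul_le_mul_of_nonneg_right hs (abs_nonneg d)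
      _ = |d| := one_mul _
      _ ≤ R * a ^ α := h2'
    have hbd : |b| * d ^ 2 ≤ |b| * (R ^ 2 * a ^ α) :=
      mul_le_mul_of_nonneg_left hd2 (abs_nonneg b)
    have hRa : R * a ≤ R * a ^ α := mul_le_mul_of_nonneg_left haaα hR
    calc |x.1 - t.1| ≤ R * a + R * a ^ α + |b| * (R ^ 2 * a ^ α) := by linarith
    _ ≤ M * a ^ α := by nlinarith [hea.le]
  have hx2 : |x.2 - t.2| ≤ M * a ^ α := by
    calc |x.2 - t.2| = |d| := rfl
    _ ≤ R * a ^ α := h2'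
    _ ≤ M * a ^ α := mul_le_mul_of_nonneg_right (by nlinarith [abs_nonneg b, sq_nonneg R]) hea.le
  have hMa : M * a ^ α < r := by
    calc M * a ^ α < M * (r / M) := by exact mul_lt_mul_of_pos_left hlt hMpos
    _ = r := by field_simp
  apply hx
  rw [Metric.mem_ball, Prod.dist_eq, Real.dist_eq, Real.dist_eq]
  exact max_lt (lt_of_le_of_lt hx1 hMa) (lt_of_le_of_lt hx2 hMa)

/-- **Theorem 3.1, Part 1.** If `dist(p, ∂D) > 0`, the bendlet transform of `χ_D`
vanishes for all sufficiently small scales; in particular it is `O(a^N)` for every `N`. -/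
theorem bendlet_transform_vanishes_away_from_boundary
    (α : ℝ) (hα : 0 < α ∧ α ≤ 1)
    (ψ : ℝ × ℝ → ℝ) (Cψ : ℝ) (hψ_bdd : ∀ x, |ψ x| ≤ Cψ) (hψ_meas : Measurable ψ)
    (hψ_supp : HasCompactSupport ψ) (hψ_vm : ∫ x : ℝ × ℝ, ψ x = 0)
    (D : Set (ℝ × ℝ)) (hD : MeasurableSet D)
    (p : ℝ × ℝ) (hp : 0 < Metric.infDist p (frontier D)) :
    ∀ s ∈ Icc (-1 : ℝ) 1, ∀ b : ℝ, ∀ ι : ℤ, (ι = 1 ∨ ι = -1) →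
      (∃ a₀ > 0, ∀ a : ℝ, 0 < a → a < a₀ →
          BS α ψ (D.indicator fun _ => (1 : ℝ)) a s b p ι = 0) ∧
      (∀ N : ℕ, ∃ C > 0, ∃ a₀ > 0, ∀ a : ℝ, 0 < a → a < a₀ →
          |BS α ψ (D.indicator fun _ => (1 : ℝ)) a s b p ι| ≤ C * a ^ N) := by
  intro s hs b ι hι
  set r : ℝ := Metric.infDist p (frontier D) with hrdef
  set f : ℝ × ℝ → ℝ := D.indicator fun _ => (1 : ℝ) with hf
  -- the ball avoids the frontier
  have hfr : ∀ x ∈ Metric.ball p r, x ∉ frontier D := by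
    intro x hx hxf
    have h1 : r ≤ dist p x := Metric.infDist_le_dist_of_mem hxf
    rw [Metric.mem_ball, dist_comm] at hx
    linarith
  have hball : Metric.ball p r ⊆ interior D ∪ interior Dᶜ := by
    intro x hx
    by_cases hxD : x ∈ closure D
    · left
      by_contra hxi
      exact hfr x hx ⟨hxD, hxi⟩
    · right
      rw [interior_compl]
      exact hxD
  have hdisj : Disjoint (interior D) (interior Dᶜ) := by
    rw [interior_compl]
    exact Set.disjoint_left.mpr fun x hx => fun hxc => hxc (subset_closure (interior_subset hx))
  have hsub := ((convex_ball p r).isPreconnected).subset_or_subset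
    isOpen_interior isOpen_interior hdisj hball
  -- constant value of f on the ball
  obtain ⟨cv, hcv⟩ : ∃ cv : ℝ, ∀ x ∈ Metric.ball p r, f x = cv := by
    rcases hsub with h | h
    · exact ⟨1, fun x hx => Set.indicator_of_mem (interior_subset (h hx)) _⟩
    · refine ⟨0, fun x hx => Set.indicator_of_notMem ?_ _⟩
      have := h hx
      rw [interior_compl] at this
      exact fun hxD => this (subset_closure hxD)
  -- bound on the support of ψ
  obtain ⟨R, hRsub⟩ := hψ_supp.isBounded.subset_closedBall 0
  have hsupp' : ∀ u : ℝ × ℝ, ψ u ≠ 0 → |u.1| ≤ max R 0 ∧ |u.2| ≤ max R 0 := by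
    intro u hu
    have hu1 : u ∈ tsupport ψ := subset_tsupport ψ (by exact hu)
    have hu2 : ‖u‖ ≤ R := by
      have := hRsub hu1
      rwa [Metric.mem_closedBall, dist_zero_right] at this
    constructor
    · calc |u.1| = ‖u.1‖ := (Real.norm_eq_abs _).symm
      _ ≤ ‖u‖ := norm_fst_le u
      _ ≤ max R 0 := le_trans hu2 (le_max_left _ _)
    · calc |u.2| = ‖u.2‖ := (Real.norm_eq_abs _).symm
      _ ≤ ‖u‖ := norm_snd_le u
      _ ≤ max R 0 := le_trans hu2 (le_max_left _ _)
  have hs' : |s| ≤ 1 := abs_le.mpr hs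
  -- main claim
  have main : ∃ a₀ > 0, ∀ a : ℝ, 0 < a → a < a₀ → BS α ψ f a s b p ι = 0 := by
    rcases hι with hι1 | hι2
    · -- horizontal cone
      obtain ⟨a₀, ha₀, hzero⟩ := bendlet_locally_zero α hα.1 hα.2 ψ (max R 0)
        (le_max_right _ _) hsupp' s hs' b p r hp
      refine ⟨a₀, ha₀, fun a ha haa => ?_⟩
      have hpw : ∀ x : ℝ × ℝ, f x * bendletC α ψ a s b p ι x
          = cv * bendlet α ψ a s b p x := by
        intro x
        rw [bendletC, if_pos hι1]
        by_cases hx : x ∈ Metric.ball p r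
        · rw [hcv x hx]
        · rw [hzero a ha haa x hx, mul_zero, mul_zero]
      rw [BS]
      simp only [hpw]
      rw [MeasureTheory.integral_const_mul,
        bendlet_integral_zero α ψ Cψ hψ_bdd hψ_meas hψ_supp hψ_vm a s b p ha, mul_zero]
    · -- vertical cone
      obtain ⟨a₀, ha₀, hzero⟩ := bendlet_locally_zero α hα.1 hα.2 ψ (max R 0)
        (le_max_right _ _) hsupp' s hs' b (p.2, p.1) r hp
      refine ⟨a₀, ha₀, fun a ha haa => ?_⟩
      have hpw : ∀ x : ℝ × ℝ, f x * bendletC α ψ a s b p ι x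
          = cv * bendlet α ψ a s b (p.2, p.1) (x.2, x.1) := by
        intro x
        rw [bendletC, if_neg (by rw [hι2]; decide)]
        by_cases hx : x ∈ Metric.ball p r
        · rw [hcv x hx]
        · have hx' : (x.2, x.1) ∉ Metric.ball ((p.2 : ℝ), (p.1 : ℝ)) r := by
            intro hmem
            apply hx
            rw [Metric.mem_ball, Prod.dist_eq] at hmem ⊢
            rwa [max_comm] at hmem
          rw [hzero a ha haa _ hx', mul_zero, mul_zero]
      rw [BS]
      simp only [hpw]
      rw [MeasureTheory.integral_const_mul]
      have hswap : ∫ x : ℝ × ℝ, bendlet α ψ a s b (p.2, p.1) (x.2, x.1)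
          = ∫ y : ℝ × ℝ, bendlet α ψ a s b (p.2, p.1) y := by
        rw [Measure.volume_eq_prod]
        exact (Measure.measurePreserving_swap).integral_comp
          (MeasurableEquiv.prodComm (α := ℝ) (β := ℝ)).measurableEmbedding _
      rw [hswap,
        bendlet_integral_zero α ψ Cψ hψ_bdd hψ_meas hψ_supp hψ_vm a s b (p.2, p.1) ha, mul_zero]
  obtain ⟨a₀, ha₀, hm⟩ := main
  refine ⟨⟨a₀, ha₀, hm⟩, fun N => ⟨1, one_pos, a₀, ha₀, fun a h1 h2 => ?_⟩⟩
  rw [hm a h1 h2, abs_zero, one_mul]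
  positivity
end

section
/- Let 0 < α < 1/2, b' < 0 and c > 0. Let ψ¹ : ℝ → ℝ be bounded and measurable with support contained in [−c,c], and let φ¹ : ℝ → ℝ be continuous and bounded. For a > 0 define I(a) := ∫_{{(x₁,x₂) : x₁ ≤ b'·x₂², |x₁| ≤ a·c}} a^{−(1+α)/2} · ψ¹(x₁/a) · φ¹(x₂/a^α) d(x₁,x₂). Then lim_{a→0⁺} a^{(α−2)/2} · √(−b') · I(a) = φ¹(0) · ∫_{{(x₁,x₂) ∈ ℝ² : x₁ ≤ −x₂²}} ψ¹(x₁) d(x₁,x₂). (Limit of the term I in the proof of Theorem 3.1, Part 2(b).) -/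
/-!
Substituting `x₁ = a y₁`, `x₂ = √(a / -b') y₂` maps the region `x₁ ≤ b' x₂²` onto the fixed region
`y₁ ≤ -y₂²`, and the Jacobian `a √(a / -b')` exactly cancels the prefactors, so the rescaled term is
`∫_{y₁ ≤ -y₂²} ψ¹(y₁) φ¹(t(a) y₂)` with `t(a) = a^{1/2-α} / √(-b')`. The cut-off `|x₁| ≤ a c` can be
dropped beforehand because `ψ¹(x₁ / a)` vanishes outside it. Since `α < 1/2`, `t(a) → 0`, and dominated
convergence applies with dominant `Cφ |ψ¹(y₁)|`, which is integrable on `y₁ ≤ -y₂²` because there the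
support of `ψ¹(y₁)` lies in the rectangle `[-c, 0] × [-√c, √c]`.
-/

open MeasureTheory Real Set Filter Topology

theorem map_volume_prodMap_mul {p q : ℝ} (hp : p ≠ 0) (hq : q ≠ 0) :
    Measure.map (Prod.map (p * ·) (q * ·)) (volume : Measure (ℝ × ℝ)) =
      ENNReal.ofReal |(p * q)⁻¹| • volume := by
  rw [Measure.volume_eq_prod, ← Measure.map_prod_map _ _ (measurable_const_mul p)
      (measurable_const_mul q), Real.map_volume_mul_left hp, Real.map_volume_mul_left hq,
    Measure.prod_smul_left, Measure.prod_smul_right, smul_smul,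
    ← ENNReal.ofReal_mul (abs_nonneg _), ← abs_mul, ← mul_inv]

theorem setIntegral_comp_prodMap_mul {E : Type*} [NormedAddCommGroup E] [NormedSpace ℝ E]
    {p q : ℝ} (hp : p ≠ 0) (hq : q ≠ 0) (s : Set (ℝ × ℝ)) (f : ℝ × ℝ → E) :
    ∫ y in Prod.map (p * ·) (q * ·) ⁻¹' s, f (p * y.1, q * y.2) = |(p * q)⁻¹| • ∫ x in s, f x := by
  have he : MeasurableEmbedding (Prod.map (p * ·) (q * ·) : ℝ × ℝ → ℝ × ℝ) :=
    (measurableEmbedding_mulLeft₀ hp).prodMap (measurableEmbedding_mulLeft₀ hq)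
  have := he.setIntegral_map (μ := volume) f s
  rwa [map_volume_prodMap_mul hp hq, Measure.restrict_smul, integral_smul_measure,
    ENNReal.toReal_ofReal (abs_nonneg _), eq_comm] at this

theorem preimage_prodMap_mul_parabola {a b : ℝ} (ha : 0 < a) (hb : b < 0) :
    Prod.map (a * ·) (√(a / -b) * ·) ⁻¹' {x : ℝ × ℝ | x.1 ≤ b * x.2 ^ 2} =
      {y | y.1 ≤ -y.2 ^ 2} := by
  have hsq : b * √(a / -b) ^ 2 = -a := by
    rw [sq_sqrt (div_pos ha (neg_pos.2 hb)).le]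
    field_simp [hb.ne]
  ext y
  simp only [mem_preimage, Prod.map_fst, Prod.map_snd, mem_ofPred_eq, mul_pow, ← mul_assoc, hsq]
  rw [neg_mul, ← mul_neg, mul_le_mul_iff_right₀ ha]

theorem integrableOn_comp_fst_parabola {ψ : ℝ → ℝ} {C c : ℝ} (hψ_bdd : ∀ x, |ψ x| ≤ C)
    (hψ : Measurable ψ) (hψ_supp : Function.support ψ ⊆ Icc (-c) c) :
    IntegrableOn (fun x : ℝ × ℝ => ψ x.1) {x | x.1 ≤ -x.2 ^ 2} := by
  have hrect : IntegrableOn (fun x : ℝ × ℝ => ψ x.1) (Icc (-c) 0 ×ˢ Icc (-√c) √c) :=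
    Measure.integrableOn_of_bounded (isCompact_Icc.prod isCompact_Icc).measure_lt_top.ne
      (hψ.comp measurable_fst).aestronglyMeasurable (M := C)
      (Eventually.of_forall fun x => hψ_bdd x.1)
  refine hrect.of_forall_sdiff_eq_zero (measurableSet_le measurable_fst (by fun_prop)) ?_
  rintro x ⟨hx, hx_rect⟩
  by_contra hψx
  have hc₁ := (hψ_supp hψx).1
  have hx₂ : |x.2| ≤ √c := by
    rw [← sqrt_sq_eq_abs]
    exact sqrt_le_sqrt (by linarith [hx.out])
  exact hx_rect ⟨⟨hc₁, by nlinarith [hx.out, sq_nonneg x.2]⟩, abs_le.1 hx₂⟩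

theorem tendsto_integral_mul_comp_mul_nhds_zero {X : Type*} [MeasurableSpace X] {μ : Measure X}
    {g : X → ℝ} (hg : Integrable g μ) {v : X → ℝ} (hv : Measurable v) {φ : ℝ → ℝ}
    (hφ : Continuous φ) {C : ℝ} (hφ_bdd : ∀ x, |φ x| ≤ C) :
    Tendsto (fun t => ∫ x, g x * φ (t * v x) ∂μ) (𝓝 0) (𝓝 (φ 0 * ∫ x, g x ∂μ)) := by
  rw [← integral_const_mul]
  refine tendsto_integral_filter_of_dominated_convergence (fun x => ‖g x‖ * C)
    (Eventually.of_forall fun t => hg.aestronglyMeasurable.mul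
      (hφ.measurable.comp (hv.const_mul t)).aestronglyMeasurable)
    (Eventually.of_forall fun t => Eventually.of_forall fun x => ?_) (hg.norm.mul_const C)
    (Eventually.of_forall fun x => ?_)
  · rw [norm_mul, norm_eq_abs (φ _)]
    exact mul_le_mul_of_nonneg_left (hφ_bdd _) (norm_nonneg _)
  · rw [mul_comm (φ 0)]
    refine tendsto_const_nhds.mul ((hφ.tendsto 0).comp ?_)
    simpa using (tendsto_id (x := 𝓝 (0:ℝ))).mul_const (v x)

theorem rpow_mul_sqrt_mul_rpow_eq_one {a b : ℝ} (ha : 0 < a) (hb : b < 0) (α : ℝ) :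
    a ^ ((α - 2) / 2) * √(-b) * (a * √(a / -b)) * a ^ (-(1 + α) / 2) = 1 := by
  have hb' : √(-b) ≠ 0 := (sqrt_pos.2 (neg_pos.2 hb)).ne'
  rw [sqrt_div ha.le, sqrt_eq_rpow a]
  calc a ^ ((α - 2) / 2) * √(-b) * (a * (a ^ (1 / 2 : ℝ) / √(-b))) * a ^ (-(1 + α) / 2)
      = a ^ ((α - 2) / 2) * a ^ (1 : ℝ) * a ^ (1 / 2 : ℝ) * a ^ (-(1 + α) / 2) := by
        rw [rpow_one]; field_simp
    _ = a ^ ((α - 2) / 2 + 1 + 1 / 2 + -(1 + α) / 2) := by simp only [rpow_add ha]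
    _ = 1 := by ring_nf; exact rpow_zero a

theorem tendsto_sqrt_div_rpow_nhdsGT_zero {α : ℝ} (hα : α < 1 / 2) (b : ℝ) :
    Tendsto (fun a : ℝ => √(a / b) / a ^ α) (𝓝[>] 0) (𝓝 0) := by
  have hlim : Tendsto (fun a : ℝ => a ^ (1 / 2 - α) / √b) (𝓝[>] 0) (𝓝 0) := by
    have := ((continuous_rpow_const (sub_pos.2 hα).le).tendsto 0).div_const √b
    rw [zero_rpow (sub_pos.2 hα).ne', zero_div] at this
    exact tendsto_nhdsWithin_of_tendsto_nhds this
  refine hlim.congr' ?_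
  filter_upwards [self_mem_nhdsWithin] with a (ha : 0 < a)
  rw [sqrt_div ha.le, sqrt_eq_rpow a, rpow_sub ha]
  ring

theorem scaled_term_I_eq {α b c a : ℝ} (hb : b < 0) (ha : 0 < a) {ψ φ : ℝ → ℝ}
    (hψ_supp : Function.support ψ ⊆ Icc (-c) c) :
    a ^ ((α - 2) / 2) * √(-b) *
        ∫ x in {x : ℝ × ℝ | x.1 ≤ b * x.2 ^ 2 ∧ |x.1| ≤ a * c},
          a ^ (-(1 + α) / 2) * ψ (x.1 / a) * φ (x.2 / a ^ α) =
      ∫ y in {y : ℝ × ℝ | y.1 ≤ -y.2 ^ 2}, ψ y.1 * φ (√(a / -b) / a ^ α * y.2) := by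
  set s := √(a / -b)
  have hs : 0 < s := sqrt_pos.2 (div_pos ha (neg_pos.2 hb))
  set F : ℝ × ℝ → ℝ := fun x => a ^ (-(1 + α) / 2) * ψ (x.1 / a) * φ (x.2 / a ^ α)
  have hstrip : ∫ x in {x : ℝ × ℝ | x.1 ≤ b * x.2 ^ 2}, F x =
      ∫ x in {x : ℝ × ℝ | x.1 ≤ b * x.2 ^ 2 ∧ |x.1| ≤ a * c}, F x := by
    refine setIntegral_eq_of_subset_of_forall_sdiff_eq_zero
      (measurableSet_le measurable_fst (by fun_prop)) (fun x hx => hx.1) fun x hx => ?_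
    have hψx : ψ (x.1 / a) = 0 := by
      refine Function.notMem_support.1 fun hmem => hx.2 ⟨hx.1, ?_⟩
      have h := abs_le.2 (hψ_supp hmem)
      rwa [abs_div, abs_of_pos ha, div_le_iff₀ ha, mul_comm] at h
    simp [F, hψx]
  have hcov := setIntegral_comp_prodMap_mul ha.ne' hs.ne' {x : ℝ × ℝ | x.1 ≤ b * x.2 ^ 2} F
  rw [preimage_prodMap_mul_parabola ha hb, hstrip, abs_inv, abs_of_pos (mul_pos ha hs),
    smul_eq_mul, eq_inv_mul_iff_mul_eq₀ (mul_pos ha hs).ne'] at hcov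
  rw [← hcov, ← mul_assoc, ← integral_const_mul]
  refine integral_congr_ae (Eventually.of_forall fun y => ?_)
  simp only [F, mul_div_cancel_left₀ _ ha.ne', mul_div_right_comm s]
  linear_combination ψ y.1 * φ (s / a ^ α * y.2) * rpow_mul_sqrt_mul_rpow_eq_one ha hb α

theorem limit_term_I_general
    (α : ℝ) (hα : 0 < α ∧ α < 1 / 2)
    (b' : ℝ) (hb' : b' < 0) (c : ℝ)
    (ψ1 : ℝ → ℝ) (Cψ : ℝ) (hψ1_bdd : ∀ x, |ψ1 x| ≤ Cψ) (hψ1_meas : Measurable ψ1)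
    (hψ1_supp : Function.support ψ1 ⊆ Icc (-c) c)
    (φ1 : ℝ → ℝ) (hφ1_cont : Continuous φ1) (Cφ : ℝ) (hφ1_bdd : ∀ x, |φ1 x| ≤ Cφ) :
    Filter.Tendsto
      (fun a : ℝ =>
        a ^ ((α - 2) / 2) * Real.sqrt (-b') *
          ∫ x in {x : ℝ × ℝ | x.1 ≤ b' * x.2 ^ 2 ∧ |x.1| ≤ a * c},
            a ^ (-(1 + α) / 2) * ψ1 (x.1 / a) * φ1 (x.2 / a ^ α))
      (nhdsWithin 0 (Ioi 0))
      (nhds (φ1 0 * ∫ x in {x : ℝ × ℝ | x.1 ≤ -x.2 ^ 2}, ψ1 x.1)) := by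
  have hlim := (tendsto_integral_mul_comp_mul_nhds_zero
    (integrableOn_comp_fst_parabola hψ1_bdd hψ1_meas hψ1_supp) measurable_snd hφ1_cont
    hφ1_bdd).comp (tendsto_sqrt_div_rpow_nhdsGT_zero hα.2 (-b'))
  refine hlim.congr' ?_
  filter_upwards [self_mem_nhdsWithin] with a (ha : 0 < a)
  exact (scaled_term_I_eq hb' ha hψ1_supp).symm

/-- **Limit of the term I in Theorem 3.1, Part 2(b).** For `0 < α < 1/2` and `b' < 0`,
`a^{(α-2)/2} √(-b') I(a) → φ¹(0) ∫_{x₁ ≤ -x₂²} ψ¹(x₁)` as `a → 0⁺`. -/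
theorem limit_term_I
    (α : ℝ) (hα : 0 < α ∧ α < 1 / 2)
    (b' : ℝ) (hb' : b' < 0) (c : ℝ) (hc : 0 < c)
    (ψ1 : ℝ → ℝ) (Cψ : ℝ) (hψ1_bdd : ∀ x, |ψ1 x| ≤ Cψ) (hψ1_meas : Measurable ψ1)
    (hψ1_supp : Function.support ψ1 ⊆ Icc (-c) c)
    (φ1 : ℝ → ℝ) (hφ1_cont : Continuous φ1) (Cφ : ℝ) (hφ1_bdd : ∀ x, |φ1 x| ≤ Cφ) :
    Filter.Tendsto
      (fun a : ℝ =>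
        a ^ ((α - 2) / 2) * Real.sqrt (-b') *
          ∫ x in {x : ℝ × ℝ | x.1 ≤ b' * x.2 ^ 2 ∧ |x.1| ≤ a * c},
            a ^ (-(1 + α) / 2) * ψ1 (x.1 / a) * φ1 (x.2 / a ^ α))
      (nhdsWithin 0 (Ioi 0))
      (nhds (φ1 0 * ∫ x in {x : ℝ × ℝ | x.1 ≤ -x.2 ^ 2}, ψ1 x.1)) :=
  limit_term_I_general α hα b' hb' c ψ1 Cψ hψ1_bdd hψ1_meas hψ1_supp φ1 hφ1_cont Cφ hφ1_bdd
end

section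
/- Let α ∈ (1/3, 1], let ψ : ℝ² → ℝ be bounded with support contained in [−c,c]², and let H : ℝ → ℝ satisfy |H(z)| ≤ c_H·|z|³ for all |z| ≤ z₀ (for some c_H, z₀ > 0). Then there exist C > 0 and a₀ > 0 such that for all a ∈ (0,a₀): | ∫_{{x ∈ ℝ² : x₁ ≤ H(x₂)}} ψ_{a,0,0,(0,0),1}(x) dx − a^{(1+α)/2} · ∫_{{x ∈ ℝ² : x₁ ≤ 0}} ψ(x) dx | ≤ C · a^{(1+α)/2 + 3α − 1}. (Asymptotic identity established in the proof of Theorem 3.1, Part 2(c).) -/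
open MeasureTheory Real Set

/-- A bounded measurable function on `ℝ²` supported in a box is integrable. -/
lemma integrable_of_bdd_supp {f : ℝ × ℝ → ℝ} (hf : Measurable f) {K : ℝ}
    (hK : ∀ x, |f x| ≤ K) {lo hi : ℝ × ℝ} (hs : Function.support f ⊆ Icc lo hi) :
    Integrable f := by
  refine Integrable.mono' (g := (Icc lo hi).indicator fun _ => K) ?_ hf.aestronglyMeasurable ?_
  · exact (integrable_indicator_iff measurableSet_Icc).2
      (integrableOn_const isCompact_Icc.measure_lt_top.ne)
  · filter_upwards with x
    by_cases hx : x ∈ Icc lo hi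
    · simpa [Set.indicator_of_mem hx] using hK x
    · have hfx : f x = 0 := by
        by_contra h
        exact hx (hs h)
      simp [hfx, Set.indicator_of_notMem hx]

set_option maxHeartbeats 1000000 in
/-- **Asymptotic identity in Theorem 3.1, Part 2(c).** For `α > 1/3`, the bendlet coefficient
of the region below the third-order perturbed graph `x₁ ≤ H(x₂)` agrees with
`a^{(1+α)/2} ∫_{x₁ ≤ 0} ψ` up to an error `O(a^{(1+α)/2 + 3α - 1})`. -/
theorem bendlet_halfplane_asymptotics
    (α : ℝ) (hα : 1 / 3 < α ∧ α ≤ 1)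
    (c : ℝ) (hc : 0 < c)
    (ψ : ℝ × ℝ → ℝ) (Cψ : ℝ) (hψ_bdd : ∀ x, |ψ x| ≤ Cψ) (hψ_meas : Measurable ψ)
    (hψ_supp : Function.support ψ ⊆ Icc (-c, -c) (c, c))
    (cH z₀ : ℝ) (hcH : 0 < cH) (hz₀ : 0 < z₀)
    (H : ℝ → ℝ) (hH_meas : Measurable H)
    (hH : ∀ z : ℝ, |z| ≤ z₀ → |H z| ≤ cH * |z| ^ 3) :
    ∃ C > 0, ∃ a₀ > 0, ∀ a : ℝ, 0 < a → a < a₀ →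
      |(∫ x in {x : ℝ × ℝ | x.1 ≤ H x.2}, bendlet α ψ a 0 0 (0, 0) x) -
          a ^ ((1 + α) / 2) * ∫ x in {x : ℝ × ℝ | x.1 ≤ 0}, ψ x|
        ≤ C * a ^ ((1 + α) / 2 + 3 * α - 1) := by
  obtain ⟨hα₁, hα₂⟩ := hα
  have hαpos : (0:ℝ) < α := by linarith
  have hCψ0 : (0:ℝ) ≤ Cψ := le_trans (abs_nonneg _) (hψ_bdd (0, 0))
  refine ⟨4 * c ^ 4 * cH * Cψ + 1, by positivity, (z₀ / c) ^ α⁻¹,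
    Real.rpow_pos_of_pos (div_pos hz₀ hc) _, ?_⟩
  intro a ha haa₀
  have hb : (0:ℝ) < a ^ α := Real.rpow_pos_of_pos ha α
  have hca : c * a ^ α < z₀ := by
    have h1 : a ^ α < ((z₀ / c) ^ α⁻¹) ^ α := Real.rpow_lt_rpow ha.le haa₀ hαpos
    have h2 : ((z₀ / c) ^ α⁻¹) ^ α = z₀ / c := by
      rw [← Real.rpow_mul (div_pos hz₀ hc).le, inv_mul_cancel₀ (ne_of_gt hαpos), Real.rpow_one]
    have h3 : a ^ α < z₀ / c := h1.trans_eq h2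
    rw [mul_comm, ← lt_div_iff₀ hc]
    exact h3
  set p : ℝ := (1 + α) / 2 with hp
  have hap : (0:ℝ) < a ^ (-p) := Real.rpow_pos_of_pos ha _
  set F : ℝ × ℝ → ℝ := fun x => a ^ (-p) * ψ (x.1 / a, x.2 / a ^ α) with hF
  have hbend : bendlet α ψ a 0 0 (0, 0) = F := by
    funext x
    have e : -(1 + α) / 2 = -p := by rw [hp]; ring
    simp [bendlet, e, shear2, hF]
    left
    congr 1
    rw [hp]; ring
  have hscale_meas : Measurable fun x : ℝ × ℝ => ((x.1 / a, x.2 / a ^ α) : ℝ × ℝ) :=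
    (measurable_fst.div_const a).prodMk (measurable_snd.div_const (a ^ α))
  have hF_meas : Measurable F := (hψ_meas.comp hscale_meas).const_mul _
  -- membership of the scaled point in the support box gives box bounds on x
  have hbox_of_supp : ∀ x : ℝ × ℝ, ψ (x.1 / a, x.2 / a ^ α) ≠ 0 →
      x ∈ Icc ((-(c * a), -(c * a ^ α)) : ℝ × ℝ) (c * a, c * a ^ α) := by
    intro x hx
    have hmem := hψ_supp hx
    simp only [Set.mem_Icc, Prod.le_def] at hmem ⊢
    obtain ⟨⟨h1, h2⟩, h3, h4⟩ := hmem
    have e1 := (le_div_iff₀ ha).1 h1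
    have e2 := (div_le_iff₀ ha).1 h3
    have e3 := (le_div_iff₀ hb).1 h2
    have e4 := (div_le_iff₀ hb).1 h4
    constructor <;> constructor <;> nlinarith
  have hF_bdd : ∀ x, |F x| ≤ a ^ (-p) * Cψ := by
    intro x
    rw [hF]
    simp only []
    rw [abs_mul, abs_of_pos hap]
    exact mul_le_mul_of_nonneg_left (hψ_bdd _) hap.le
  have hF_supp : Function.support F ⊆ Icc ((-(c * a), -(c * a ^ α)) : ℝ × ℝ) (c * a, c * a ^ α) := by
    intro x hx
    refine hbox_of_supp x ?_
    intro h0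
    apply hx
    simp [hF, h0]
  have hF_int : Integrable F := integrable_of_bdd_supp hF_meas hF_bdd hF_supp
  have hS₁ : MeasurableSet {x : ℝ × ℝ | x.1 ≤ H x.2} :=
    measurableSet_le measurable_fst (hH_meas.comp measurable_snd)
  have hS₂ : MeasurableSet {x : ℝ × ℝ | x.1 ≤ 0} :=
    measurableSet_le measurable_fst measurable_const
  -- Change of variables: the bendlet coefficient of the exact half-plane
  have hJ : (∫ x in {x : ℝ × ℝ | x.1 ≤ 0}, F x)
      = a ^ p * ∫ x in {x : ℝ × ℝ | x.1 ≤ 0}, ψ x := by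
    set Φ : ℝ × ℝ → ℝ := fun u => Set.indicator {u : ℝ × ℝ | u.1 ≤ 0} ψ u with hΦ
    have hΦ_meas : Measurable Φ := hψ_meas.indicator hS₂
    have hΦ_bdd : ∀ u, |Φ u| ≤ Cψ := by
      intro u
      by_cases hu : u ∈ {u : ℝ × ℝ | u.1 ≤ 0}
      · simpa [hΦ, Set.indicator_of_mem hu] using hψ_bdd u
      · simp [hΦ, Set.indicator_of_notMem hu, hCψ0]
    have hΦ_supp : Function.support Φ ⊆ Icc ((-c, -c) : ℝ × ℝ) (c, c) := by
      intro u hu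
      refine hψ_supp ?_
      intro h0
      apply hu
      simp [hΦ, Set.indicator_apply, h0]
    have hΦ_int : Integrable Φ := integrable_of_bdd_supp hΦ_meas hΦ_bdd hΦ_supp
    set g : ℝ × ℝ → ℝ := fun x => Φ (x.1 / a, x.2 / a ^ α) with hg
    have hg_meas : Measurable g := hΦ_meas.comp hscale_meas
    have hg_bdd : ∀ x, |g x| ≤ Cψ := fun x => hΦ_bdd _
    have hg_supp : Function.support g ⊆ Icc ((-(c * a), -(c * a ^ α)) : ℝ × ℝ) (c * a, c * a ^ α) := by
      intro x hx
      refine hbox_of_supp x ?_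
      intro h0
      apply hx
      simp [hg, hΦ, Set.indicator_apply, h0]
    have hg_int : Integrable g := integrable_of_bdd_supp hg_meas hg_bdd hg_supp
    have key : (∫ x : ℝ × ℝ, g x) = (a * a ^ α) * ∫ u, Φ u := by
      have h1 : (∫ x : ℝ × ℝ, g x) = ∫ x : ℝ, ∫ y : ℝ, Φ (x / a, y / a ^ α) := by
        rw [Measure.volume_eq_prod] at hg_int ⊢
        exact integral_prod _ hg_int
      have h2 : ∀ x : ℝ, (∫ y : ℝ, Φ (x / a, y / a ^ α)) = a ^ α * ∫ y : ℝ, Φ (x / a, y) := by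
        intro x
        rw [Measure.integral_comp_div (fun y => Φ (x / a, y)) (a ^ α), abs_of_pos hb,
          smul_eq_mul]
      have h4 : (∫ x : ℝ, ∫ y : ℝ, Φ (x / a, y)) = a * ∫ x : ℝ, ∫ y : ℝ, Φ (x, y) := by
        rw [Measure.integral_comp_div (fun x => ∫ y : ℝ, Φ (x, y)) a, abs_of_pos ha, smul_eq_mul]
      have h5 : (∫ x : ℝ, ∫ y : ℝ, Φ (x, y)) = ∫ u, Φ u := by
        rw [Measure.volume_eq_prod] at hΦ_int ⊢
        exact (integral_prod _ hΦ_int).symm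
      rw [h1]
      simp_rw [h2]
      rw [integral_const_mul, h4, h5]
      ring
    rw [← integral_indicator hS₂, ← integral_indicator hS₂]
    have hind : (Set.indicator {x : ℝ × ℝ | x.1 ≤ 0} F) = fun x => a ^ (-p) * g x := by
      funext x
      have hiff : x.1 / a ≤ 0 ↔ x.1 ≤ 0 := by
        constructor
        · intro h
          nlinarith [(div_le_iff₀ ha).1 h]
        · intro h
          exact div_nonpos_iff.2 (Or.inr ⟨h, ha.le⟩)
      by_cases hx : x.1 ≤ 0
      · rw [Set.indicator_of_mem (by exact hx : x ∈ {x : ℝ × ℝ | x.1 ≤ 0})]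
        have : ((x.1 / a, x.2 / a ^ α) : ℝ × ℝ) ∈ {u : ℝ × ℝ | u.1 ≤ 0} := hiff.2 hx
        simp [hg, hΦ, hF, Set.indicator_of_mem this]
      · rw [Set.indicator_of_notMem (by exact hx : x ∉ {x : ℝ × ℝ | x.1 ≤ 0})]
        have : ((x.1 / a, x.2 / a ^ α) : ℝ × ℝ) ∉ {u : ℝ × ℝ | u.1 ≤ 0} := fun h => hx (hiff.1 h)
        simp [hg, hΦ, Set.indicator_of_notMem this]
    rw [hind, integral_const_mul, key]
    have hpw : a ^ (-p) * (a * a ^ α) = a ^ p := by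
      have h1 : a * a ^ α = a ^ (1 + α) := by
        rw [Real.rpow_add ha, Real.rpow_one]
      rw [h1, ← Real.rpow_add ha]
      congr 1
      rw [hp]; ring
    calc a ^ (-p) * ((a * a ^ α) * ∫ u, Φ u) = (a ^ (-p) * (a * a ^ α)) * ∫ u, Φ u := by ring
      _ = a ^ p * ∫ u, Φ u := by rw [hpw]
  -- the error estimate
  set M : ℝ := cH * (c * a ^ α) ^ 3 with hM
  have hM0 : (0:ℝ) < M := by positivity
  set box : Set (ℝ × ℝ) := Icc ((-M, -(c * a ^ α)) : ℝ × ℝ) (M, c * a ^ α) with hbox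
  have hpt : ∀ x : ℝ × ℝ,
      ‖Set.indicator {x : ℝ × ℝ | x.1 ≤ H x.2} F x - Set.indicator {x : ℝ × ℝ | x.1 ≤ 0} F x‖
        ≤ box.indicator (fun _ => a ^ (-p) * Cψ) x := by
    intro x
    have hnn : (0:ℝ) ≤ box.indicator (fun _ => a ^ (-p) * Cψ) x :=
      Set.indicator_nonneg (fun _ _ => by positivity) x
    by_cases hψ0 : ψ (x.1 / a, x.2 / a ^ α) = 0
    · have hFx : F x = 0 := by simp [hF, hψ0]
      simpa [Set.indicator_apply, hFx] using hnn
    · have hxbox := hbox_of_supp x hψ0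
      simp only [Set.mem_Icc, Prod.le_def] at hxbox
      obtain ⟨⟨_, hb1⟩, _, hb2⟩ := hxbox
      have hx2 : |x.2| ≤ c * a ^ α := abs_le.2 ⟨hb1, hb2⟩
      have hz : |x.2| ≤ z₀ := hx2.trans hca.le
      have hHx : |H x.2| ≤ M := by
        calc |H x.2| ≤ cH * |x.2| ^ 3 := hH _ hz
          _ ≤ cH * (c * a ^ α) ^ 3 :=
            mul_le_mul_of_nonneg_left (pow_le_pow_left₀ (abs_nonneg _) hx2 3) hcH.le
      have habs := abs_le.1 hHx
      have hmem : (x.1 ≤ H x.2 ∧ ¬ x.1 ≤ 0) ∨ (¬ x.1 ≤ H x.2 ∧ x.1 ≤ 0) → x ∈ box := by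
        rintro (⟨hle, hgt⟩ | ⟨hgt, hle⟩) <;>
        · simp only [hbox, Set.mem_Icc, Prod.le_def]
          push_neg at hgt
          exact ⟨⟨by linarith, hb1⟩, by linarith, hb2⟩
      by_cases h1 : x.1 ≤ H x.2 <;> by_cases h2 : x.1 ≤ 0
      · simpa [Set.indicator_apply, h1, h2] using hnn
      · have hxb : x ∈ box := hmem (Or.inl ⟨h1, h2⟩)
        rw [Set.indicator_of_mem hxb]
        simp only [Set.indicator_apply, Set.mem_setOf_eq, h1, h2, if_true, if_false, sub_zero]
        simpa [Real.norm_eq_abs] using hF_bdd x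
      · have hxb : x ∈ box := hmem (Or.inr ⟨h1, h2⟩)
        rw [Set.indicator_of_mem hxb]
        simp only [Set.indicator_apply, Set.mem_setOf_eq, h1, h2, if_true, if_false, zero_sub]
        simpa [Real.norm_eq_abs] using hF_bdd x
      · simpa [Set.indicator_apply, h1, h2] using hnn
  have hbox_int : Integrable (box.indicator fun _ : ℝ × ℝ => a ^ (-p) * Cψ) :=
    (integrable_indicator_iff measurableSet_Icc).2
      (integrableOn_const isCompact_Icc.measure_lt_top.ne)
  have hvol : (volume box).toReal = (2 * M) * (2 * (c * a ^ α)) := by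
    rw [hbox, Icc_prod_eq]
    simp only [Measure.volume_eq_prod, Measure.prod_prod, Real.volume_Icc]
    have hq : (0:ℝ) < c * a ^ α := mul_pos hc hb
    rw [← ENNReal.ofReal_mul (by linarith), ENNReal.toReal_ofReal
      (by nlinarith [mul_pos hM0 hq])]
    ring
  -- main estimate
  rw [hbend, ← hJ, ← integral_indicator hS₁, ← integral_indicator hS₂,
    ← integral_sub (hF_int.indicator hS₁) (hF_int.indicator hS₂)]
  have hub : |∫ x, (Set.indicator {x : ℝ × ℝ | x.1 ≤ H x.2} F x
        - Set.indicator {x : ℝ × ℝ | x.1 ≤ 0} F x)|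
      ≤ (2 * M) * (2 * (c * a ^ α)) * (a ^ (-p) * Cψ) := by
    calc |∫ x, (Set.indicator {x : ℝ × ℝ | x.1 ≤ H x.2} F x
          - Set.indicator {x : ℝ × ℝ | x.1 ≤ 0} F x)|
        ≤ ∫ x, ‖Set.indicator {x : ℝ × ℝ | x.1 ≤ H x.2} F x
          - Set.indicator {x : ℝ × ℝ | x.1 ≤ 0} F x‖ := by
          rw [← Real.norm_eq_abs]
          exact norm_integral_le_integral_norm _
      _ ≤ ∫ x, box.indicator (fun _ => a ^ (-p) * Cψ) x :=
          integral_mono_of_nonneg (Filter.Eventually.of_forall fun x => norm_nonneg _)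
            hbox_int (Filter.Eventually.of_forall hpt)
      _ = (volume box).toReal • (a ^ (-p) * Cψ) := integral_indicator_const _ measurableSet_Icc
      _ = (2 * M) * (2 * (c * a ^ α)) * (a ^ (-p) * Cψ) := by rw [hvol, smul_eq_mul]
  refine hub.trans ?_
  have hpow : a ^ (-p) * (a ^ α) ^ 4 = a ^ (p + 3 * α - 1) := by
    rw [← Real.rpow_natCast (a ^ α) 4, ← Real.rpow_mul ha.le, ← Real.rpow_add ha]
    congr 1
    rw [hp]; push_cast; ring
  have heq : (2 * M) * (2 * (c * a ^ α)) * (a ^ (-p) * Cψ)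
      = (4 * c ^ 4 * cH * Cψ) * (a ^ (-p) * (a ^ α) ^ 4) := by
    rw [hM]; ring
  rw [heq, hpow]
  have hrp : (0:ℝ) < a ^ (p + 3 * α - 1) := Real.rpow_pos_of_pos ha _
  nlinarith [mul_nonneg (mul_nonneg (mul_nonneg (by norm_num : (0:ℝ) ≤ 4) (by positivity : (0:ℝ) ≤ c ^ 4)) hcH.le) hCψ0]
end

section
/- Let α ∈ (0,1] and let ψ : ℝ² → ℝ be integrable. Let D̃ := { x ∈ ℝ² : x₁ ≤ 1 − x₂²/2 }. Then for every a > 0 the exact identity ∫_{D̃} ψ_{a,0,−1/2,(1,0),1}(x) dx = a^{(1+α)/2} · ∫_{{x ∈ ℝ² : x₁ ≤ 0}} ψ(x) dx holds, i.e. the bendlet coefficient of χ_{D̃} at scale a, shear 0, bending −1/2 and location (1,0) equals a^{(1+α)/2} times the half-space integral of the generator. (Exact computation of case d) of the heuristic classification in Section 2.2.) -/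
open MeasureTheory Real Set
open scoped ENNReal NNReal

lemma smul_prod_aux {X Y : Type*} [MeasurableSpace X] [MeasurableSpace Y]
    (c : ℝ≥0∞) (μ : Measure X) (ν : Measure Y) [SigmaFinite ν] :
    (c • μ).prod ν = c • μ.prod ν := by
  ext s hs
  rw [Measure.prod_apply hs, Measure.smul_apply, Measure.prod_apply hs,
    lintegral_smul_measure, smul_eq_mul]

lemma prod_smul_aux {X Y : Type*} [MeasurableSpace X] [MeasurableSpace Y]
    (c : ℝ≥0∞) (hc : c ≠ ∞) (μ : Measure X) (ν : Measure Y) [SigmaFinite ν] :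
    μ.prod (c • ν) = c • μ.prod ν := by
  have h : c • ν = (c.toNNReal : ℝ≥0) • ν := by
    ext s hs
    simp [ENNReal.smul_def, ENNReal.coe_toNNReal hc]
  rw [h]
  ext s hs2
  rw [Measure.prod_apply hs2, Measure.smul_apply, Measure.prod_apply hs2, smul_eq_mul,
    ← lintegral_const_mul' _ _ hc]
  simp [ENNReal.smul_def, ENNReal.coe_toNNReal hc]


/-- **Exact computation of case d) in Section 2.2.** For the parabolic model domain
`D̃ = {x₁ ≤ 1 - x₂²/2}` of the unit disk near `(1,0)`, the bendlet coefficient at scale `a`,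
shear `0`, bending `-1/2` and location `(1,0)` equals `a^{(1+α)/2} ∫_{x₁ ≤ 0} ψ`. -/
theorem bendlet_parabolic_model_exact
    (α : ℝ) (hα : 0 < α ∧ α ≤ 1)
    (ψ : ℝ × ℝ → ℝ) (hψ : Integrable ψ (volume : Measure (ℝ × ℝ))) :
    ∀ a : ℝ, 0 < a →
      ∫ x in {x : ℝ × ℝ | x.1 ≤ 1 - x.2 ^ 2 / 2}, bendlet α ψ a 0 (-(1 / 2)) (1, 0) x
        = a ^ ((1 + α) / 2) * ∫ x in {x : ℝ × ℝ | x.1 ≤ 0}, ψ x := by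
  intro a ha
  have ha' : a ≠ 0 := ne_of_gt ha
  have hbpos : (0:ℝ) < a ^ α := Real.rpow_pos_of_pos ha α
  have hb' : (a:ℝ) ^ α ≠ 0 := ne_of_gt hbpos
  -- the change-of-variables map
  set T : ℝ × ℝ → ℝ × ℝ :=
    fun p => (a * p.1 + (1 - (a ^ α * p.2) ^ 2 / 2), a ^ α * p.2) with hTdef
  have hTmeas : Measurable T := by
    apply Measurable.prod <;> fun_prop
  -- T as a measurable equiv
  have hTinv : Function.LeftInverse
      (fun q : ℝ × ℝ => ((q.1 - 1 + q.2 ^ 2 / 2) / a, q.2 / a ^ α)) T := by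
    intro p
    simp only [hTdef]
    refine Prod.ext ?_ ?_ <;> simp only <;> field_simp <;> ring
  have hTinv' : Function.RightInverse
      (fun q : ℝ × ℝ => ((q.1 - 1 + q.2 ^ 2 / 2) / a, q.2 / a ^ α)) T := by
    intro q
    simp only [hTdef]
    refine Prod.ext ?_ ?_ <;> simp only <;> field_simp <;> ring
  let Te : (ℝ × ℝ) ≃ᵐ (ℝ × ℝ) :=
    { toFun := T
      invFun := fun q => ((q.1 - 1 + q.2 ^ 2 / 2) / a, q.2 / a ^ α)
      left_inv := hTinv
      right_inv := hTinv'
      measurable_toFun := hTmeas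
      measurable_invFun :=
        (by fun_prop : Measurable fun q : ℝ × ℝ => ((q.1 - 1 + q.2 ^ 2 / 2) / a, q.2 / a ^ α)) }
  -- the skew product map
  set W : ℝ × ℝ → ℝ × ℝ :=
    fun p => (a ^ α * p.1, a * p.2 + (1 - (a ^ α * p.1) ^ 2 / 2)) with hWdef
  have hW : MeasurePreserving W ((volume : Measure ℝ).prod volume)
      ((ENNReal.ofReal |(a ^ α)⁻¹| • volume).prod (ENNReal.ofReal |a⁻¹| • volume)) := by
    refine MeasurePreserving.skew_product
      (f := fun v : ℝ => a ^ α * v)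
      (g := fun v u => a * u + (1 - (a ^ α * v) ^ 2 / 2))
      ⟨by fun_prop, Real.map_volume_mul_left hb'⟩ (by fun_prop) ?_
    filter_upwards with v
    have : (fun u => a * u + (1 - (a ^ α * v) ^ 2 / 2))
        = (fun u => u + (1 - (a ^ α * v) ^ 2 / 2)) ∘ (fun u => a * u) := rfl
    rw [this, ← Measure.map_map (by fun_prop) (by fun_prop), Real.map_volume_mul_left ha',
      Measure.map_smul, map_add_right_eq_self]
  have hswap : MeasurePreserving (Prod.swap : ℝ × ℝ → ℝ × ℝ)
      ((volume : Measure ℝ).prod volume) ((volume : Measure ℝ).prod volume) :=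
    Measure.measurePreserving_swap
  have hswap2 : MeasurePreserving (Prod.swap : ℝ × ℝ → ℝ × ℝ)
      ((ENNReal.ofReal |(a ^ α)⁻¹| • volume).prod (ENNReal.ofReal |a⁻¹| • volume))
      ((ENNReal.ofReal |a⁻¹| • (volume : Measure ℝ)).prod (ENNReal.ofReal |(a ^ α)⁻¹| • volume)) :=
    Measure.measurePreserving_swap
  have hTW : T = Prod.swap ∘ W ∘ Prod.swap := by
    funext x
    simp [hTdef, hWdef, Prod.swap]
  have hT : MeasurePreserving T ((volume : Measure ℝ).prod volume)
      ((ENNReal.ofReal |a⁻¹| • (volume : Measure ℝ)).prod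
        (ENNReal.ofReal |(a ^ α)⁻¹| • volume)) := by
    rw [hTW]
    exact (hswap2.comp hW).comp hswap
  -- rewrite target measure as a scalar multiple of volume
  have hfin : ENNReal.ofReal |(a ^ α)⁻¹| ≠ ∞ := ENNReal.ofReal_ne_top
  have hmapT : Measure.map T (volume : Measure (ℝ × ℝ))
      = (ENNReal.ofReal |a⁻¹| * ENNReal.ofReal |(a ^ α)⁻¹|) • (volume : Measure (ℝ × ℝ)) := by
    rw [Measure.volume_eq_prod, hT.map_eq, prod_smul_aux _ hfin, smul_prod_aux, smul_smul, mul_comm]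
  -- the final measure preserving statement
  set C : ℝ≥0∞ := ENNReal.ofReal (a * a ^ α) with hCdef
  have hCmul : C * (ENNReal.ofReal |a⁻¹| * ENNReal.ofReal |(a ^ α)⁻¹|) = 1 := by
    rw [← ENNReal.ofReal_mul (abs_nonneg _), ← ENNReal.ofReal_mul (by positivity),
      abs_of_pos (by positivity), abs_of_pos (by positivity)]
    rw [show a * a ^ α * (a⁻¹ * (a ^ α)⁻¹) = 1 by field_simp]
    exact ENNReal.ofReal_one
  have hTP : MeasurePreserving T (C • (volume : Measure (ℝ × ℝ))) volume := by
    refine ⟨hTmeas, ?_⟩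
    rw [Measure.map_smul, hmapT, smul_smul, hCmul, one_smul]
  -- apply the set-integral change of variables
  have hkey := hTP.setIntegral_preimage_emb Te.measurableEmbedding
    (bendlet α ψ a 0 (-(1 / 2)) (1, 0)) {x : ℝ × ℝ | x.1 ≤ 1 - x.2 ^ 2 / 2}
  rw [← hkey]
  -- identify the preimage set
  have hpre : T ⁻¹' {x : ℝ × ℝ | x.1 ≤ 1 - x.2 ^ 2 / 2} = {x : ℝ × ℝ | x.1 ≤ 0} := by
    ext x
    simp only [Set.mem_preimage, Set.mem_setOf_eq, hTdef]
    constructor <;> intro h <;> nlinarith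
  -- compute the composed integrand
  have hcomp : ∀ x : ℝ × ℝ,
      bendlet α ψ a 0 (-(1 / 2)) (1, 0) (T x) = a ^ (-(1 + α) / 2) * ψ x := by
    intro x
    simp only [bendlet, shear2, hTdef, Prod.mk_sub_mk, Prod.fst, Prod.snd]
    congr 1
    congr 1
    refine Prod.ext ?_ ?_ <;> simp only <;> field_simp <;> ring
  show (∫ x in T ⁻¹' _, bendlet α ψ a 0 (-(1 / 2)) (1, 0) (T x) ∂(C • volume)) = _
  rw [hpre]
  rw [Measure.restrict_smul, integral_smul_measure]
  have hCreal : C.toReal = a * a ^ α := ENNReal.toReal_ofReal (by positivity)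
  rw [hCreal]
  rw [show (fun x => bendlet α ψ a 0 (-(1 / 2)) (1, 0) (T x))
      = fun x => a ^ (-(1 + α) / 2) * ψ x from funext hcomp]
  have hexp : a * a ^ α * a ^ (-(1 + α) / 2) = a ^ ((1 + α) / 2) := by
    rw [show a * a ^ α = a ^ ((1:ℝ) + α) by rw [Real.rpow_add ha, Real.rpow_one],
      ← Real.rpow_add ha]
    congr 1
    ring
  rw [MeasureTheory.integral_const_mul, smul_eq_mul, ← mul_assoc, hexp]
end

section
/- Let M ∈ ℕ and c > 0. Let ψ¹ : ℝ → ℝ be bounded and measurable with support contained in [−c,c] and with ∫_ℝ x^n ψ¹(x) dx = 0 for all integers 0 ≤ n ≤ M. Let f : ℝ → ℝ be of class C^{M+1} with bounded (M+1)-st derivative. Then for all a > 0: |∫_ℝ ψ¹(x/a) f(x) dx| ≤ (2 c^{M+2} / (M+1)!) · ‖ψ¹‖_∞ · ‖f^{(M+1)}‖_∞ · a^{M+2}. (Vanishing-moment estimate implicit in the proof of Theorem 3.1, Part 2(a), where Taylor polynomials of degree ≤ M are annihilated by the moments of ψ¹.) -/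
/-!
The substitution `x = a y` turns the integral into `a ∫ ψ¹(y) f(a y) dy`, and the `(M+1)`-st
derivative of `y ↦ f(a y)` is bounded by `a^{M+1} ‖f^{(M+1)}‖_∞`, so it suffices to take `a = 1`.
Then the vanishing moments kill the Taylor polynomial of degree `M` of `f` at `0`, and what is
left is the Lagrange remainder, at most `‖f^{(M+1)}‖_∞ c^{M+1} / (M+1)!` on `[-c, c]`.
-/

open MeasureTheory Real Set
open scoped Nat

theorem taylorWithinEval_eq_taylorWithinEval_univ {E : Type*} [NormedAddCommGroup E]
    [NormedSpace ℝ E] {f : ℝ → E} {n : ℕ} {s : Set ℝ} {x₀ : ℝ} (hf : ContDiff ℝ n f)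
    (hs : UniqueDiffOn ℝ s) (hx₀ : x₀ ∈ s) :
    taylorWithinEval f n s x₀ = taylorWithinEval f n univ x₀ := by
  funext x
  simp only [taylor_within_apply, iteratedDerivWithin_univ]
  refine Finset.sum_congr rfl fun k hk => ?_
  rw [iteratedDerivWithin_eq_iteratedDeriv hs (hf.contDiffAt.of_le ?_) hx₀]
  exact_mod_cast Finset.mem_range_succ_iff.1 hk

theorem abs_sub_taylorWithinEval_univ_le {f : ℝ → ℝ} {n : ℕ} {C : ℝ}
    (hf : ContDiff ℝ (n + 1) f) (hC : ∀ x, |iteratedDeriv (n + 1) f x| ≤ C) (x₀ x : ℝ) :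
    |f x - taylorWithinEval f n univ x₀ x| ≤ C * |x - x₀| ^ (n + 1) / (n + 1)! := by
  rcases eq_or_ne x₀ x with rfl | hx
  · have hC0 : 0 ≤ C := (abs_nonneg _).trans (hC x₀)
    simp only [taylorWithinEval_self, sub_self, abs_zero]
    positivity
  obtain ⟨x', -, hx'⟩ := taylor_mean_remainder_lagrange_iteratedDeriv hx hf.contDiffOn
  rw [← taylorWithinEval_eq_taylorWithinEval_univ hf.of_succ (uniqueDiffOn_uIcc hx)
    left_mem_uIcc, hx', abs_div, abs_mul, abs_pow, Nat.abs_cast]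
  gcongr
  exact hC x'

theorem integral_mul_taylorWithinEval_eq_zero {ψ g : ℝ → ℝ} {n : ℕ}
    (hint : ∀ k ≤ n, Integrable fun x => x ^ k * ψ x)
    (hvm : ∀ k ≤ n, ∫ x, x ^ k * ψ x = 0) (s : Set ℝ) :
    ∫ x, ψ x * taylorWithinEval g n s 0 x = 0 := by
  have hterm : ∀ x, ∀ k, ψ x * (((k ! : ℝ)⁻¹ * (x - 0) ^ k) • iteratedDerivWithin k g s 0)
      = ((k ! : ℝ)⁻¹ * iteratedDerivWithin k g s 0) * (x ^ k * ψ x) := fun x k => by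
    rw [sub_zero, smul_eq_mul]; ring
  simp only [taylor_within_apply, Finset.mul_sum, hterm]
  rw [integral_finsetSum _ fun k hk => (hint k (Finset.mem_range_succ_iff.1 hk)).const_mul _]
  refine Finset.sum_eq_zero fun k hk => ?_
  rw [integral_const_mul, hvm k (Finset.mem_range_succ_iff.1 hk), mul_zero]

theorem Continuous.integrable_mul_of_support_subset {X : Type*} [TopologicalSpace X] [T2Space X]
    [MeasurableSpace X] [OpensMeasurableSpace X] {μ : Measure X} [IsFiniteMeasureOnCompacts μ]
    {ψ g : X → ℝ} {K : Set X} {C : ℝ} (hg : Continuous g) (hK : IsCompact K)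
    (hψ : AEStronglyMeasurable ψ μ) (hψ_supp : Function.support ψ ⊆ K)
    (hψ_bdd : ∀ x, |ψ x| ≤ C) :
    Integrable (fun x => ψ x * g x) μ := by
  refine IntegrableOn.integrable_of_forall_notMem_eq_zero
    ((hg.continuousOn.integrableOn_compact hK).bdd_mul hψ.restrict (ae_of_all _ hψ_bdd))
    fun x hx => ?_
  rw [Function.notMem_support.1 fun h => hx (hψ_supp h), zero_mul]

theorem norm_integral_le_of_support_subset {X E : Type*} [MeasurableSpace X]
    [NormedAddCommGroup E] [NormedSpace ℝ E] {μ : Measure X} {f : X → E} {s : Set X} {C : ℝ}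
    (hs : μ s < ⊤) (hf : Function.support f ⊆ s) (hC : ∀ x ∈ s, ‖f x‖ ≤ C) :
    ‖∫ x, f x ∂μ‖ ≤ C * μ.real s := by
  rw [← setIntegral_eq_integral_of_forall_compl_eq_zero
    fun x hx => Function.notMem_support.1 fun h => hx (hf h)]
  exact norm_setIntegral_le_of_norm_le_const hs hC

theorem abs_integral_mul_le_of_moments_vanish {ψ g : ℝ → ℝ} {M : ℕ} {c Cψ Cg : ℝ}
    (hc : 0 ≤ c) (hψ : Measurable ψ) (hψ_supp : Function.support ψ ⊆ Icc (-c) c)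
    (hψ_bdd : ∀ x, |ψ x| ≤ Cψ) (hψ_vm : ∀ n ≤ M, ∫ x, x ^ n * ψ x = 0)
    (hg : ContDiff ℝ (M + 1) g) (hCg : ∀ x, |iteratedDeriv (M + 1) g x| ≤ Cg) :
    |∫ x, ψ x * g x| ≤ 2 * c ^ (M + 2) / (M + 1)! * Cψ * Cg := by
  have hCψ : 0 ≤ Cψ := (abs_nonneg _).trans (hψ_bdd 0)
  have hCg0 : 0 ≤ Cg := (abs_nonneg _).trans (hCg 0)
  set P := taylorWithinEval g M univ 0
  have hint : ∀ h : ℝ → ℝ, Continuous h → Integrable fun x => ψ x * h x := fun h hh =>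
    hh.integrable_mul_of_support_subset isCompact_Icc hψ.aestronglyMeasurable hψ_supp hψ_bdd
  have hP : Continuous P := by
    simp only [P, funext (taylor_within_apply g M univ 0)]
    fun_prop
  have hψP : ∫ x, ψ x * P x = 0 :=
    integral_mul_taylorWithinEval_eq_zero
      (fun k _ => by simpa only [mul_comm] using hint _ (continuous_pow k)) hψ_vm univ
  have hremainder : ∫ x, ψ x * g x = ∫ x, ψ x * (g x - P x) := by
    simp only [mul_sub]
    rw [integral_sub (hint g hg.continuous) (hint P hP), hψP, sub_zero]
  rw [hremainder, ← Real.norm_eq_abs]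
  refine (norm_integral_le_of_support_subset (C := Cψ * (Cg * c ^ (M + 1) / (M + 1)!))
    measure_Icc_lt_top (fun x hx => hψ_supp (Function.support_mul_subset_left _ _ hx))
    fun x hx => ?_).trans_eq ?_
  · rw [Real.norm_eq_abs, abs_mul]
    have hx' : |x - 0| ≤ c := by rw [sub_zero]; exact abs_le.2 hx
    gcongr
    · exact hψ_bdd x
    · exact (abs_sub_taylorWithinEval_univ_le hg hCg 0 x).trans (by gcongr)
  · rw [Real.volume_real_Icc_of_le (by linarith)]
    ring

/-- **Vanishing-moment estimate in Theorem 3.1, Part 2(a).** If `ψ¹` has `M` vanishing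
moments and support in `[-c,c]`, and `f ∈ C^{M+1}` has bounded `(M+1)`-st derivative, then
`|∫ ψ¹(x/a) f(x) dx| ≤ (2 c^{M+2}/(M+1)!) ‖ψ¹‖_∞ ‖f^{(M+1)}‖_∞ a^{M+2}`. -/
theorem vanishing_moment_estimate
    (M : ℕ) (c : ℝ) (hc : 0 < c)
    (ψ1 : ℝ → ℝ) (hψ1_meas : Measurable ψ1)
    (hψ1_supp : Function.support ψ1 ⊆ Icc (-c) c)
    (Cψ : ℝ) (hψ1_bdd : ∀ x, |ψ1 x| ≤ Cψ)
    (hψ1_vm : ∀ n : ℕ, n ≤ M → ∫ x : ℝ, x ^ n * ψ1 x = 0)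
    (f : ℝ → ℝ) (hf : ContDiff ℝ ((M + 1 : ℕ) : ℕ∞) f)
    (Cf : ℝ) (hCf : ∀ x, |iteratedDeriv (M + 1) f x| ≤ Cf) :
    ∀ a : ℝ, 0 < a →
      |∫ x : ℝ, ψ1 (x / a) * f x|
        ≤ (2 * c ^ (M + 2) / (Nat.factorial (M + 1))) * Cψ * Cf * a ^ (M + 2) := by
  intro a ha
  have hf' : ContDiff ℝ (M + 1) f := by exact_mod_cast hf
  have hfa : ContDiff ℝ (M + 1) fun y => f (a * y) := hf'.comp (contDiff_const.mul contDiff_id)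
  have hCfa : ∀ y, |iteratedDeriv (M + 1) (fun y => f (a * y)) y| ≤ a ^ (M + 1) * Cf := by
    intro y
    rw [iteratedDeriv_comp_const_mul hf', abs_mul, abs_pow, abs_of_pos ha]
    gcongr
    exact hCf _
  have hrescale : ∫ x, ψ1 (x / a) * f x = a * ∫ y, ψ1 y * f (a * y) := by
    have := Measure.integral_comp_div (fun y => ψ1 y * f (a * y)) a
    simp only [mul_div_cancel₀ _ ha.ne'] at this
    rw [this, abs_of_pos ha, smul_eq_mul]
  rw [hrescale, abs_mul, abs_of_pos ha]
  calc a * |∫ y, ψ1 y * f (a * y)|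
      ≤ a * (2 * c ^ (M + 2) / (M + 1)! * Cψ * (a ^ (M + 1) * Cf)) := by
        gcongr
        exact abs_integral_mul_le_of_moments_vanish hc.le hψ1_meas hψ1_supp hψ1_bdd hψ1_vm
          hfa hCfa
    _ = 2 * c ^ (M + 2) / (M + 1)! * Cψ * Cf * a ^ (M + 2) := by ring
end
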